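/- Let f(z) = ∑_{n=0}^∞ a_n z^n be analytic on the unit disk with |f| ≤ 1, let m ≥ 1, N ≥ 1 be integers and p ∈ (0,2]. Then |f(z^m)|^p + ∑_{n=N}^∞ |a_n| r^n ≤ 1 for all z with |z| = r ≤ ρ, where ρ is the minimal positive root of 2(1+x^m) x^N − p(1−x)(1−x^m) = 0. -/

import Mathlib

/-!
Wiener's inequality `‖aₙ‖ ≤ 1 - ‖a₀‖²` (`n ≥ 1`) bounds the tail by `(1 - ‖a₀‖²) rᴺ / (1 - r)`.
The Schwarz–Pick lemma gives `1 - ‖f w‖² ≥ (1 - ‖a₀‖²) (1 - ‖w‖) / (1 + ‖w‖)`, and Bernoulli's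
inequality `t ^ p ≤ 1 - (p / 2) (1 - t²)` for `p ≤ 2` turns this into
`‖f (z ^ m)‖ ^ p ≤ 1 - (p / 2) (1 - ‖a₀‖²) (1 - r ^ m) / (1 + r ^ m)`. The two bounds add up to at
most `1` as soon as `2 (1 + r ^ m) rᴺ ≤ p (1 - r) (1 - r ^ m)`, and this holds for `r ≤ ρ` because
the difference of the two sides is `-p < 0` at `0` and does not vanish on `(0, ρ)`.
-/

open Metric Complex FormalMultilinearSeries Set
open scoped ComplexConjugate

section PowerSeries

variable {𝕜 : Type*} [RCLike 𝕜] {f : 𝕜 → 𝕜} {c : ℕ → 𝕜} {R : ℝ}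

theorem hasFPowerSeriesOnBall_ofScalars_of_hasSum (hR : 0 < R)
    (hf : ∀ z ∈ ball (0 : 𝕜) R, HasSum (fun n => c n * z ^ n) (f z)) :
    HasFPowerSeriesOnBall f (ofScalars 𝕜 c) 0 (ENNReal.ofReal R) where
  r_le := by
    refine ENNReal.le_of_forall_nnreal_lt fun t ht => ?_
    have ht' : ((t : ℝ) : 𝕜) ∈ ball (0 : 𝕜) R := by
      simpa using (ENNReal.coe_lt_ofReal).1 ht
    refine (ofScalars 𝕜 c).le_radius_of_tendsto (l := 0) ?_
    simpa [ofScalars_norm] using (hf _ ht').summable.tendsto_atTop_zero.norm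
  r_pos := by simpa using hR
  hasSum := fun {y} hy => by
    simpa [ofScalars_apply_eq, mul_comm] using hf y (by simpa using hy)

theorem differentiableOn_of_hasSum_mul_pow (hR : 0 < R)
    (hf : ∀ z ∈ ball (0 : 𝕜) R, HasSum (fun n => c n * z ^ n) (f z)) :
    DifferentiableOn 𝕜 f (ball 0 R) := by
  simpa using (hasFPowerSeriesOnBall_ofScalars_of_hasSum hR hf).differentiableOn

end PowerSeries

noncomputable def moebius (a z : ℂ) : ℂ := (z - a) / (1 - conj a * z)

section Moebius

variable {a z : ℂ}

theorem sq_norm_one_sub_conj_mul_sub_sq_norm_sub (a z : ℂ) :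
    ‖1 - conj a * z‖ ^ 2 - ‖z - a‖ ^ 2 = (1 - ‖a‖ ^ 2) * (1 - ‖z‖ ^ 2) := by
  simp only [Complex.sq_norm, Complex.normSq_apply, sub_re, sub_im, mul_re, mul_im, conj_re,
    conj_im, one_re, one_im]
  ring

theorem one_sub_conj_mul_ne_zero (ha : ‖a‖ < 1) (hz : ‖z‖ ≤ 1) : 1 - conj a * z ≠ 0 := by
  rw [sub_ne_zero]
  intro h
  have : ‖conj a * z‖ < 1 := by
    rw [norm_mul, Complex.norm_conj]
    nlinarith [norm_nonneg a, norm_nonneg z]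
  rw [← h, norm_one] at this
  exact this.false

theorem norm_moebius_le_one (ha : ‖a‖ < 1) (hz : ‖z‖ ≤ 1) : ‖moebius a z‖ ≤ 1 := by
  have hpos := norm_pos_iff.2 (one_sub_conj_mul_ne_zero ha hz)
  rw [moebius, norm_div, div_le_one hpos,
    ← pow_le_pow_iff_left₀ (norm_nonneg _) hpos.le two_ne_zero]
  have : 0 ≤ (1 - ‖a‖ ^ 2) * (1 - ‖z‖ ^ 2) := by
    apply mul_nonneg <;> nlinarith [norm_nonneg a, norm_nonneg z]
  linarith [sq_norm_one_sub_conj_mul_sub_sq_norm_sub a z]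

theorem one_sub_sq_norm_moebius (h : 1 - conj a * z ≠ 0) :
    1 - ‖moebius a z‖ ^ 2 = (1 - ‖a‖ ^ 2) * (1 - ‖z‖ ^ 2) / ‖1 - conj a * z‖ ^ 2 := by
  rw [← sq_norm_one_sub_conj_mul_sub_sq_norm_sub, moebius, norm_div, div_pow, sub_div,
    div_self (by positivity)]

theorem moebius_neg_moebius (ha : ‖a‖ < 1) (h : 1 - conj a * z ≠ 0) :
    moebius (-a) (moebius a z) = z := by
  have hA : (1 : ℂ) - conj a * a ≠ 0 := by
    rw [conj_mul', ← ofReal_pow, ← ofReal_one, ← ofReal_sub, ofReal_ne_zero]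
    nlinarith [norm_nonneg a]
  have h' : 1 - z * conj a ≠ 0 := by rwa [mul_comm]
  have hnum : moebius a z - -a = (1 - conj a * a) * z / (1 - conj a * z) := by
    rw [moebius]; field_simp; ring
  have hden : 1 - conj (-a) * moebius a z = (1 - conj a * a) / (1 - conj a * z) := by
    rw [moebius, map_neg]; field_simp; ring
  rw [moebius, hnum, hden, div_div_div_cancel_right₀ h, mul_div_cancel_left₀ _ hA]

theorem hasDerivAt_moebius (h : 1 - conj a * z ≠ 0) :
    HasDerivAt (moebius a) ((1 - conj a * a) / (1 - conj a * z) ^ 2) z :=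
  (((hasDerivAt_id' z).sub_const a).div
    (((hasDerivAt_id' z).const_mul (conj a)).const_sub 1) h).congr_deriv (by ring)

@[simp] theorem moebius_self (a : ℂ) : moebius a a = 0 := by simp [moebius]

theorem mapsTo_moebius_closedBall (ha : ‖a‖ < 1) :
    MapsTo (moebius a) (closedBall 0 1) (closedBall 0 1) := fun _ hz =>
  mem_closedBall_zero_iff.2 (norm_moebius_le_one ha (mem_closedBall_zero_iff.1 hz))

theorem differentiableOn_moebius_closedBall (ha : ‖a‖ < 1) :
    DifferentiableOn ℂ (moebius a) (closedBall 0 1) := fun _ hz =>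
  (hasDerivAt_moebius (one_sub_conj_mul_ne_zero ha (mem_closedBall_zero_iff.1 hz)))
    |>.differentiableAt.differentiableWithinAt

end Moebius

section SchwarzPick

variable {f : ℂ → ℂ}

theorem norm_deriv_le_one_sub_sq_norm_of_mapsTo_ball (hf : DifferentiableOn ℂ f (ball 0 1))
    (hb : MapsTo f (ball 0 1) (closedBall 0 1)) : ‖deriv f 0‖ ≤ 1 - ‖f 0‖ ^ 2 := by
  rcases (mem_closedBall_zero_iff.1 (hb (mem_ball_self one_pos))).lt_or_eq with ha | ha
  · set a := f 0
    have hA := one_sub_conj_mul_ne_zero ha ha.le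
    have hS := norm_deriv_le_one_of_mapsTo_ball
      ((differentiableOn_moebius_closedBall ha).comp hf hb)
      (by simpa [a] using (mapsTo_moebius_closedBall ha).comp hb) one_pos
    have hchain : HasDerivAt (moebius a ∘ f) ((1 - conj a * a)⁻¹ * deriv f 0) 0 := by
      have := (hasDerivAt_moebius hA).comp 0
        (hf.differentiableAt (ball_mem_nhds 0 one_pos)).hasDerivAt
      rwa [sq, div_mul_cancel_right₀ hA] at this
    have hnorm : ‖1 - conj a * a‖ = 1 - ‖a‖ ^ 2 := by
      rw [conj_mul', ← ofReal_pow, ← ofReal_one, ← ofReal_sub, norm_real, Real.norm_of_nonneg]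
      nlinarith [norm_nonneg a]
    rw [hchain.deriv, norm_mul, norm_inv, hnorm, inv_mul_le_iff₀ (by nlinarith [norm_nonneg a]),
      mul_one] at hS
    exact hS
  · have hconst : EqOn f (Function.const ℂ (f 0)) (ball 0 1) :=
      Complex.eqOn_of_isPreconnected_of_isMaxOn_norm (convex_ball 0 1).isPreconnected
        isOpen_ball hf (mem_ball_self one_pos)
        fun z hz => by simpa [ha] using hb hz
    rw [(hconst.eventuallyEq_of_mem (ball_mem_nhds 0 one_pos)).deriv_eq, ha]
    have : deriv (Function.const ℂ (f 0)) 0 = 0 := deriv_const 0 (f 0)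
    simp [this]

theorem le_one_sub_sq_norm_of_mapsTo_ball (hf : DifferentiableOn ℂ f (ball 0 1))
    (hb : MapsTo f (ball 0 1) (closedBall 0 1)) {w : ℂ} (hw : ‖w‖ < 1) :
    (1 - ‖f 0‖ ^ 2) * ((1 - ‖w‖) / (1 + ‖w‖)) ≤ 1 - ‖f w‖ ^ 2 := by
  have hfw : ‖f w‖ ≤ 1 := mem_closedBall_zero_iff.1 (hb (mem_ball_zero_iff.2 hw))
  have hw0 := norm_nonneg w
  rcases (mem_closedBall_zero_iff.1 (hb (mem_ball_self one_pos))).lt_or_eq with ha | ha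
  swap
  · rw [ha]; nlinarith [norm_nonneg (f w)]
  set a := f 0
  set u := moebius a (f w)
  have hu : ‖u‖ ≤ ‖w‖ := norm_le_norm_of_mapsTo_ball
    ((differentiableOn_moebius_closedBall ha).comp hf hb)
    ((mapsTo_moebius_closedBall ha).comp hb) (moebius_self a) hw
  have hu0 := norm_nonneg u
  have hu1 : ‖u‖ < 1 := hu.trans_lt hw
  have hden : 1 - conj (-a) * u ≠ 0 := one_sub_conj_mul_ne_zero (by simpa) (by linarith)
  have hden_le : ‖1 - conj (-a) * u‖ ≤ 1 + ‖u‖ := by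
    refine (norm_sub_le _ _).trans ?_
    rw [norm_one, norm_mul, norm_conj, norm_neg]
    nlinarith
  rw [← moebius_neg_moebius ha (one_sub_conj_mul_ne_zero ha hfw), one_sub_sq_norm_moebius hden,
    norm_neg]
  have hA : 0 ≤ 1 - ‖a‖ ^ 2 := by nlinarith [norm_nonneg a]
  calc (1 - ‖a‖ ^ 2) * ((1 - ‖w‖) / (1 + ‖w‖))
      ≤ (1 - ‖a‖ ^ 2) * ((1 - ‖u‖) / (1 + ‖u‖)) := by
        refine mul_le_mul_of_nonneg_left ?_ hA
        rw [div_le_div_iff₀ (by positivity) (by positivity)]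
        nlinarith
    _ = (1 - ‖a‖ ^ 2) * (1 - ‖u‖ ^ 2) / (1 + ‖u‖) ^ 2 := by
        field_simp
        ring
    _ ≤ (1 - ‖a‖ ^ 2) * (1 - ‖u‖ ^ 2) / ‖1 - conj (-a) * u‖ ^ 2 := by
        have : 0 ≤ 1 - ‖u‖ ^ 2 := by nlinarith
        gcongr

end SchwarzPick

theorem IsPrimitiveRoot.sum_pow_pow_eq_ite {R : Type*} [CommRing R] [IsDomain R] {ω : R}
    {n : ℕ} (hω : IsPrimitiveRoot ω n) (j : ℕ) :
    ∑ k ∈ Finset.range n, (ω ^ j) ^ k = if n ∣ j then (n : R) else 0 := by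
  split_ifs with h
  · simp [(hω.pow_eq_one_iff_dvd j).2 h]
  · have hne : ω ^ j - 1 ≠ 0 := sub_ne_zero.2 fun h1 => h ((hω.pow_eq_one_iff_dvd j).1 h1)
    apply mul_right_cancel₀ hne
    rw [geom_sum_mul, ← pow_mul, mul_comm, pow_mul, hω.pow_eq_one, one_pow, sub_self, zero_mul]

theorem hasSum_coeff_mul_pow_of_isPrimitiveRoot {c : ℕ → ℂ} {f : ℂ → ℂ} {ω z : ℂ} {n : ℕ}
    (hω : IsPrimitiveRoot ω n) (hn : n ≠ 0)
    (hf : ∀ k ∈ Finset.range n, HasSum (fun j => c j * (ω ^ k * z) ^ j) (f (ω ^ k * z))) :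
    HasSum (fun j => c (j * n) * (z ^ n) ^ j)
      ((n : ℂ)⁻¹ * ∑ k ∈ Finset.range n, f (ω ^ k * z)) := by
  have hterm : ∀ j, (n : ℂ)⁻¹ * ∑ k ∈ Finset.range n, c j * (ω ^ k * z) ^ j =
      if n ∣ j then c j * z ^ j else 0 := by
    intro j
    have : ∀ k, c j * (ω ^ k * z) ^ j = c j * z ^ j * (ω ^ j) ^ k := fun k => by ring
    rw [Finset.sum_congr rfl fun k _ => this k, ← Finset.mul_sum, hω.sum_pow_pow_eq_ite]
    split_ifs
    · field_simp
    · rw [mul_zero, mul_zero]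
  have hsum := (hasSum_sum hf).mul_left (n : ℂ)⁻¹
  simp_rw [hterm] at hsum
  rw [← (mul_left_injective₀ (M₀ := ℕ) (b := n) hn).hasSum_iff] at hsum
  · refine hsum.congr_fun fun j => ?_
    rw [Function.comp_apply, if_pos (dvd_mul_left n j), ← pow_mul, mul_comm n j]
  · rintro j hj
    rw [if_neg]
    rintro ⟨i, rfl⟩
    exact hj ⟨i, mul_comm _ _⟩

theorem norm_coeff_le_one_sub_sq_norm_coeff_zero {f : ℂ → ℂ} {c : ℕ → ℂ}
    (hf : ∀ z ∈ ball (0 : ℂ) 1, HasSum (fun n => c n * z ^ n) (f z))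
    (hb : MapsTo f (ball 0 1) (closedBall 0 1)) {n : ℕ} (hn : n ≠ 0) :
    ‖c n‖ ≤ 1 - ‖c 0‖ ^ 2 := by
  obtain ⟨ω, hω⟩ : ∃ ω : ℂ, IsPrimitiveRoot ω n := ⟨_, Complex.isPrimitiveRoot_exp n hn⟩
  have hfilter : ∀ z ∈ ball (0 : ℂ) 1, HasSum (fun j => c (j * n) * (z ^ n) ^ j)
      ((n : ℂ)⁻¹ * ∑ k ∈ Finset.range n, f (ω ^ k * z)) := fun z hz =>
    hasSum_coeff_mul_pow_of_isPrimitiveRoot hω hn fun k _ =>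
      hf _ (by simpa [hω.norm'_eq_one hn] using hz)
  have hroot : ∀ w ∈ ball (0 : ℂ) 1, ∃ z ∈ ball (0 : ℂ) 1, z ^ n = w := by
    intro w hw
    obtain ⟨z, rfl⟩ := IsAlgClosed.exists_pow_nat_eq w (Nat.pos_of_ne_zero hn)
    rw [mem_ball_zero_iff, norm_pow, pow_lt_one_iff_of_nonneg (norm_nonneg z) hn] at hw
    exact ⟨z, mem_ball_zero_iff.2 hw, rfl⟩
  -- `h (z ^ n)` is the average of `f` over the rotations `ω ^ k * z`, so `‖h‖ ≤ 1`, and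
  -- Schwarz–Pick at `0` for `h` bounds `deriv h 0 = c n`.
  set h : ℂ → ℂ := fun w => ∑' j, c (j * n) * w ^ j
  have hh : ∀ w ∈ ball (0 : ℂ) 1, HasSum (fun j => c (j * n) * w ^ j) (h w) := by
    intro w hw
    obtain ⟨z, hz, rfl⟩ := hroot w hw
    exact (hfilter z hz).summable.hasSum
  have hhb : MapsTo h (ball 0 1) (closedBall 0 1) := by
    intro w hw
    obtain ⟨z, hz, rfl⟩ := hroot w hw
    rw [mem_closedBall_zero_iff, (hh _ hw).unique (hfilter z hz), norm_mul, norm_inv,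
      Complex.norm_natCast, inv_mul_le_iff₀ (by positivity), mul_one]
    refine (norm_sum_le _ _).trans ?_
    simpa using Finset.sum_le_sum (s := Finset.range n) fun k _ => mem_closedBall_zero_iff.1
      (hb (by simpa [hω.norm'_eq_one hn] using hz) : f (ω ^ k * z) ∈ _)
  have hH := hasFPowerSeriesOnBall_ofScalars_of_hasSum one_pos hh
  have := norm_deriv_le_one_sub_sq_norm_of_mapsTo_ball
    (differentiableOn_of_hasSum_mul_pow one_pos hh) hhb
  rw [hH.hasFPowerSeriesAt.deriv, ← hH.coeff_zero (fun _ => 0)] at this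
  simpa [ofScalars_apply_eq] using this

theorem rpow_le_one_sub_mul_one_sub_sq {x p : ℝ} (hx : 0 ≤ x) (hp0 : 0 ≤ p) (hp2 : p ≤ 2) :
    x ^ p ≤ 1 - p / 2 * (1 - x ^ 2) := by
  have h := rpow_one_add_le_one_add_mul_self (s := x ^ 2 - 1) (by nlinarith) (p := p / 2)
    (by positivity) (by linarith)
  have hpow : (x ^ 2) ^ (p / 2) = x ^ p := by
    rw [← Real.rpow_natCast, ← Real.rpow_mul hx, Nat.cast_ofNat, mul_div_cancel₀ _ two_ne_zero]
  rw [add_sub_cancel, hpow] at h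
  linarith

def bohrRadiusPoly (m N : ℕ) (p x : ℝ) : ℝ :=
  2 * (1 + x ^ m) * x ^ N - p * (1 - x) * (1 - x ^ m)

theorem bohrRadiusPoly_zero {m N : ℕ} (hm : m ≠ 0) (hN : N ≠ 0) (p : ℝ) :
    bohrRadiusPoly m N p 0 = -p := by
  simp [bohrRadiusPoly, hm, hN]

theorem bohrRadiusPoly_pos_of_one_le {m N : ℕ} (hN : N ≠ 0) {p x : ℝ} (hp : p ≤ 2)
    (hx : 1 ≤ x) :
    0 < bohrRadiusPoly m N p x := by
  have hxm : 1 ≤ x ^ m := one_le_pow₀ hx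
  have hxN : x ≤ x ^ N := le_self_pow₀ hx hN
  have hprod : 0 ≤ (x - 1) * (x ^ m - 1) := mul_nonneg (by linarith) (by linarith)
  unfold bohrRadiusPoly
  nlinarith [mul_le_mul_of_nonneg_right hxN (by linarith : (0 : ℝ) ≤ 1 + x ^ m)]

theorem pow_div_one_sub_le_of_bohrRadiusPoly_nonpos {m N : ℕ} {p r : ℝ} (hr0 : 0 ≤ r)
    (hr1 : r < 1) (h : bohrRadiusPoly m N p r ≤ 0) :
    r ^ N / (1 - r) ≤ p / 2 * ((1 - r ^ m) / (1 + r ^ m)) := by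
  have hrm : 0 ≤ r ^ m := pow_nonneg hr0 m
  unfold bohrRadiusPoly at h
  rw [div_le_iff₀ (by linarith), mul_div_assoc', div_mul_eq_mul_div,
    le_div_iff₀ (by positivity)]
  nlinarith

theorem nonpos_of_le_pos_roots {F : ℝ → ℝ} (hF : Continuous F) (h0 : F 0 < 0) {ρ r : ℝ}
    (hρ : ∀ x, 0 < x → F x = 0 → ρ ≤ x) (hr0 : 0 ≤ r) (hr : r ≤ ρ) : F r ≤ 0 := by
  by_contra! hpos
  obtain ⟨x, hx, hFx⟩ := intermediate_value_Ioo hr0 hF.continuousOn ⟨h0, hpos⟩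
  linarith [hρ x hx.1 hFx, hx.2]

theorem tsum_norm_mul_pow_add_le {E : Type*} [SeminormedAddCommGroup E] {a : ℕ → E} {N : ℕ}
    {B r : ℝ} (hB : ∀ n, ‖a (n + N)‖ ≤ B) (hr0 : 0 ≤ r) (hr1 : r < 1) :
    ∑' n, ‖a (n + N)‖ * r ^ (n + N) ≤ B * (r ^ N / (1 - r)) := by
  have hgeo := (hasSum_geometric_of_lt_one hr0 hr1).mul_left (B * r ^ N)
  have hle : ∀ n, ‖a (n + N)‖ * r ^ (n + N) ≤ B * r ^ N * r ^ n := fun n => by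
    rw [pow_add, mul_comm (r ^ n), ← mul_assoc]
    gcongr
    exact hB n
  calc ∑' n, ‖a (n + N)‖ * r ^ (n + N)
      ≤ ∑' n, B * r ^ N * r ^ n :=
        (Summable.of_nonneg_of_le (fun n => by positivity) hle hgeo.summable).tsum_le_tsum hle
          hgeo.summable
    _ = B * (r ^ N / (1 - r)) := by rw [hgeo.tsum_eq, mul_assoc, div_eq_mul_inv]

theorem bohr_power_p_general (f : ℂ → ℂ) (a : ℕ → ℂ)
    (hexp : ∀ z ∈ ball (0 : ℂ) 1, HasSum (fun n => a n * z ^ n) (f z))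
    (hb : ∀ z ∈ ball (0 : ℂ) 1, ‖f z‖ ≤ 1)
    (m N : ℕ) (hm : 1 ≤ m) (hN : 1 ≤ N)
    (p : ℝ) (hp : p ∈ Set.Ioc (0 : ℝ) 2)
    (ρ : ℝ)
    (hρmin : ∀ x : ℝ, 0 < x →
      2 * (1 + x ^ m) * x ^ N - p * (1 - x) * (1 - x ^ m) = 0 → ρ ≤ x)
    (z : ℂ) (r : ℝ) (hrz : ‖z‖ = r) (hr : r ≤ ρ) :
    ‖f (z ^ m)‖ ^ p + ∑' n, ‖a (n + N)‖ * r ^ (n + N) ≤ 1 := by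
  obtain ⟨hp0, hp2⟩ := hp
  have hr0 : 0 ≤ r := hrz ▸ norm_nonneg z
  have hroot : bohrRadiusPoly m N p r ≤ 0 :=
    nonpos_of_le_pos_roots (by unfold bohrRadiusPoly; fun_prop)
      (by rw [bohrRadiusPoly_zero (by omega) (by omega)]; linarith) hρmin hr0 hr
  have hr1 : r < 1 := lt_of_not_ge fun h =>
    (bohrRadiusPoly_pos_of_one_le (by omega) hp2 h).not_ge hroot
  have hmaps : MapsTo f (ball 0 1) (closedBall 0 1) := fun z hz =>
    mem_closedBall_zero_iff.2 (hb z hz)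
  have hf0 : f 0 = a 0 := by
    simpa using
      ((hasFPowerSeriesOnBall_ofScalars_of_hasSum one_pos hexp).coeff_zero fun _ => 0).symm
  have hA : 0 ≤ 1 - ‖a 0‖ ^ 2 := by
    nlinarith [norm_nonneg (a 0), hf0 ▸ hb 0 (mem_ball_self one_pos)]
  have hzm : ‖z ^ m‖ = r ^ m := by rw [norm_pow, hrz]
  have hpick := le_one_sub_sq_norm_of_mapsTo_ball
    (differentiableOn_of_hasSum_mul_pow one_pos hexp) hmaps (w := z ^ m)
    (by rw [hzm]; exact pow_lt_one₀ hr0 hr1 (by omega))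
  rw [hzm, hf0] at hpick
  have htail := tsum_norm_mul_pow_add_le
    (fun n => norm_coeff_le_one_sub_sq_norm_coeff_zero hexp hmaps (n := n + N) (by omega)) hr0 hr1
  have hkey := pow_div_one_sub_le_of_bohrRadiusPoly_nonpos (m := m) hr0 hr1 hroot
  calc ‖f (z ^ m)‖ ^ p + ∑' n, ‖a (n + N)‖ * r ^ (n + N)
      ≤ (1 - p / 2 * (1 - ‖f (z ^ m)‖ ^ 2)) + (1 - ‖a 0‖ ^ 2) * (r ^ N / (1 - r)) :=
        add_le_add (rpow_le_one_sub_mul_one_sub_sq (norm_nonneg _) hp0.le hp2) htail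
    _ ≤ 1 := by
      nlinarith [mul_le_mul_of_nonneg_left hkey hA, mul_le_mul_of_nonneg_left hpick hp0.le]

/-- For `f ∈ 𝓑`, `m, N ≥ 1`, `p ∈ (0,2]`:
`|f(z^m)|^p + ∑_{n≥N} |aₙ| rⁿ ≤ 1` for `|z| = r ≤ ρ`, where `ρ` is the minimal
positive root of `2(1+x^m)x^N - p(1-x)(1-x^m) = 0`. -/
theorem bohr_power_p (f : ℂ → ℂ) (a : ℕ → ℂ)
    (hexp : ∀ z ∈ ball (0 : ℂ) 1, HasSum (fun n => a n * z ^ n) (f z))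
    (hana : AnalyticOn ℂ f (ball (0 : ℂ) 1))
    (hb : ∀ z ∈ ball (0 : ℂ) 1, ‖f z‖ ≤ 1)
    (m N : ℕ) (hm : 1 ≤ m) (hN : 1 ≤ N)
    (p : ℝ) (hp : p ∈ Set.Ioc (0 : ℝ) 2)
    (ρ : ℝ) (hρ0 : 0 < ρ)
    (hρroot : 2 * (1 + ρ ^ m) * ρ ^ N - p * (1 - ρ) * (1 - ρ ^ m) = 0)
    (hρmin : ∀ x : ℝ, 0 < x →
      2 * (1 + x ^ m) * x ^ N - p * (1 - x) * (1 - x ^ m) = 0 → ρ ≤ x)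
    (z : ℂ) (r : ℝ) (hrz : ‖z‖ = r) (hr : r ≤ ρ) :
    ‖f (z ^ m)‖ ^ p + ∑' n, ‖a (n + N)‖ * r ^ (n + N) ≤ 1 :=
  bohr_power_p_general f a hexp hb m N hm hN p hp ρ hρmin z r hrz hr
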